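/- Fix z, c ∈ ℝ and work on W = {(x₁,y₁,x₂,y₂) ∈ ℝ⁴ : x₁ ≠ 0, x₂ ≠ 0} with the two-site canonical Poisson bracket {f,g} = Σ_{s=1,2} (∂f/∂x_s ∂g/∂y_s − ∂f/∂y_s ∂g/∂x_s). Define the coproduct functions h^{(2)}_{z,1} = (1/2)(x₁² + x₂²), h^{(2)}_{z,2} = −(1/2)·( sinhc(z x₁²)·x₁ y₁·e^{z x₂²} + e^{−z x₁²}·sinhc(z x₂²)·x₂ y₂ ), h^{(2)}_{z,3} = (1/2)·( sinhc(z x₁²)·y₁² + c/(x₁²·sinhc(z x₁²)) )·e^{z x₂²} + (1/2)·e^{−z x₁²}·( sinhc(z x₂²)·y₂² + c/(x₂²·sinhc(z x₂²)) ). Then these three functions close the same deformed Poisson brackets as the one-site deformed Milne–Pinney Hamiltonians: {h^{(2)}_{z,1}, h^{(2)}_{z,2}} = −sinhc(2z h^{(2)}_{z,1})·h^{(2)}_{z,1}, {h^{(2)}_{z,1}, h^{(2)}_{z,3}} = −2 h^{(2)}_{z,2}, {h^{(2)}_{z,2}, h^{(2)}_{z,3}} = −cosh(2z h^{(2)}_{z,1})·h^{(2)}_{z,3}.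 -/

import Mathlib

/-- The cardinal hyperbolic sine: `sinhc t = sinh t / t` for `t ≠ 0`, `sinhc 0 = 1`. -/
noncomputable def sinhc (t : ℝ) : ℝ := if t = 0 then 1 else Real.sinh t / t

/-- Two-site canonical Poisson bracket on ℝ⁴ with coordinates `(x₁,y₁,x₂,y₂)`:
`{f,g} = Σ_{s=1,2} (∂f/∂x_s ∂g/∂y_s − ∂f/∂y_s ∂g/∂x_s)`. -/
noncomputable def pb4 (f g : ℝ × ℝ × ℝ × ℝ → ℝ) (p : ℝ × ℝ × ℝ × ℝ) : ℝ :=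
  fderiv ℝ f p (1, 0, 0, 0) * fderiv ℝ g p (0, 1, 0, 0)
    - fderiv ℝ f p (0, 1, 0, 0) * fderiv ℝ g p (1, 0, 0, 0)
    + fderiv ℝ f p (0, 0, 1, 0) * fderiv ℝ g p (0, 0, 0, 1)
    - fderiv ℝ f p (0, 0, 0, 1) * fderiv ℝ g p (0, 0, 1, 0)

/-- Coproduct Hamiltonian `h^{(2)}_{z,1} = (x₁² + x₂²)/2`. -/
noncomputable def H1 (p : ℝ × ℝ × ℝ × ℝ) : ℝ := (1 / 2) * (p.1 ^ 2 + p.2.2.1 ^ 2)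

/-- Coproduct Hamiltonian `h^{(2)}_{z,2}`. -/
noncomputable def H2 (z : ℝ) (p : ℝ × ℝ × ℝ × ℝ) : ℝ :=
  -(1 / 2) * (sinhc (z * p.1 ^ 2) * p.1 * p.2.1 * Real.exp (z * p.2.2.1 ^ 2)
    + Real.exp (-(z * p.1 ^ 2)) * sinhc (z * p.2.2.1 ^ 2) * p.2.2.1 * p.2.2.2)

/-- Coproduct Hamiltonian `h^{(2)}_{z,3}`. -/
noncomputable def H3 (z c : ℝ) (p : ℝ × ℝ × ℝ × ℝ) : ℝ :=
  (1 / 2) * (sinhc (z * p.1 ^ 2) * p.2.1 ^ 2 + c / (p.1 ^ 2 * sinhc (z * p.1 ^ 2)))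
      * Real.exp (z * p.2.2.1 ^ 2)
    + (1 / 2) * Real.exp (-(z * p.1 ^ 2))
      * (sinhc (z * p.2.2.1 ^ 2) * p.2.2.2 ^ 2 + c / (p.2.2.1 ^ 2 * sinhc (z * p.2.2.1 ^ 2)))

set_option maxHeartbeats 2000000
/-- The coproduct functions `h^{(2)}_{z,i}` close the same deformed sl(2)
Poisson brackets as the one-site deformed Milne–Pinney Hamiltonians, on
`{x₁ ≠ 0, x₂ ≠ 0}` with the two-site canonical bracket. -/
theorem coproduct_deformed_brackets (z c : ℝ) :
    ∀ p : ℝ × ℝ × ℝ × ℝ, p.1 ≠ 0 → p.2.2.1 ≠ 0 →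
      pb4 H1 (H2 z) p = -(sinhc (2 * z * H1 p) * H1 p) ∧
      pb4 H1 (H3 z c) p = -(2 * H2 z p) ∧
      pb4 (H2 z) (H3 z c) p = -(Real.cosh (2 * z * H1 p) * H3 z c p) := by
  rintro ⟨x1, y1, x2, y2⟩ hx1 hx2
  dsimp only at hx1 hx2
  have P1 : HasFDerivAt (𝕜 := ℝ) (fun q : ℝ×ℝ×ℝ×ℝ => q.1) _ (x1,y1,x2,y2) := hasFDerivAt_fst
  have P2 : HasFDerivAt (𝕜 := ℝ) (fun q : ℝ×ℝ×ℝ×ℝ => q.2.1) _ (x1,y1,x2,y2) :=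
    hasFDerivAt_snd.fst
  have P3 : HasFDerivAt (𝕜 := ℝ) (fun q : ℝ×ℝ×ℝ×ℝ => q.2.2.1) _ (x1,y1,x2,y2) :=
    hasFDerivAt_snd.snd.fst
  have P4 : HasFDerivAt (𝕜 := ℝ) (fun q : ℝ×ℝ×ℝ×ℝ => q.2.2.2) _ (x1,y1,x2,y2) :=
    hasFDerivAt_snd.snd.snd
  have hH1 : HasFDerivAt (𝕜 := ℝ) H1 _ (x1,y1,x2,y2) :=
    (((hasDerivAt_pow 2 x1).comp_hasFDerivAt _ P1).add
      ((hasDerivAt_pow 2 x2).comp_hasFDerivAt _ P3)).const_mul (1/2)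
  by_cases hz : z = 0
  · subst hz
    have hH2 : HasFDerivAt (𝕜 := ℝ) (H2 0) _ (x1,y1,x2,y2) :=
      (((P1.mul P2).add (P3.mul P4)).const_mul (-(1/2))).congr_of_eventuallyEq
        (Filter.Eventually.of_forall fun q => by simp [H2, sinhc])
    have hc1 : HasDerivAt (fun x : ℝ => c / x ^ 2) _ x1 :=
      (hasDerivAt_const x1 c).div (hasDerivAt_pow 2 x1) (pow_ne_zero 2 hx1)
    have hc2 : HasDerivAt (fun x : ℝ => c / x ^ 2) _ x2 :=
      (hasDerivAt_const x2 c).div (hasDerivAt_pow 2 x2) (pow_ne_zero 2 hx2)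
    have hH3 : HasFDerivAt (𝕜 := ℝ) (H3 0 c) _ (x1,y1,x2,y2) :=
      (((((hasDerivAt_pow 2 y1).comp_hasFDerivAt _ P2).add
            (hc1.comp_hasFDerivAt _ P1)).const_mul (1/2)).add
        ((((hasDerivAt_pow 2 y2).comp_hasFDerivAt _ P4).add
            (hc2.comp_hasFDerivAt _ P3)).const_mul (1/2))).congr_of_eventuallyEq
        (Filter.Eventually.of_forall fun q => by simp [H3, sinhc])
    refine ⟨?_, ?_, ?_⟩
    · simp only [pb4]
      rw [hH1.fderiv, hH2.fderiv]
      simp [H1, H2, sinhc]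
      try ring
    · simp only [pb4]
      rw [hH1.fderiv, hH3.fderiv]
      simp [H1, H2, H3, sinhc]
      try field_simp
      try ring
    · simp only [pb4]
      rw [hH2.fderiv, hH3.fderiv]
      simp [H1, H2, H3, sinhc]
      try field_simp
      try ring
  · -- z ≠ 0
    have hz1 : z * x1 ^ 2 ≠ 0 := mul_ne_zero hz (pow_ne_zero 2 hx1)
    have hz2 : z * x2 ^ 2 ≠ 0 := mul_ne_zero hz (pow_ne_zero 2 hx2)
    have hsh1 : Real.sinh (z * x1 ^ 2) ≠ 0 := Real.sinh_ne_zero.mpr hz1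
    have hsh2 : Real.sinh (z * x2 ^ 2) ≠ 0 := Real.sinh_ne_zero.mpr hz2
    -- one-variable derivatives at x1
    have d1 : HasDerivAt (fun x : ℝ => z * x ^ 2) _ x1 := (hasDerivAt_pow 2 x1).const_mul z
    have ds1 := d1.sinh
    have dA1 : HasDerivAt (fun x : ℝ => Real.sinh (z * x ^ 2) / (z * x)) _ x1 :=
      ds1.div ((hasDerivAt_id x1).const_mul z) (mul_ne_zero hz hx1)
    have dC1 : HasDerivAt (fun x : ℝ => Real.exp (-(z * x ^ 2))) _ x1 := d1.neg.exp
    have dD1 : HasDerivAt (fun x : ℝ => Real.sinh (z * x ^ 2) / (z * x ^ 2)) _ x1 :=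
      ds1.div d1 hz1
    have dE1 : HasDerivAt (fun x : ℝ => c * z / Real.sinh (z * x ^ 2)) _ x1 :=
      (hasDerivAt_const x1 (c * z)).div ds1 hsh1
    -- one-variable derivatives at x2
    have d2 : HasDerivAt (fun x : ℝ => z * x ^ 2) _ x2 := (hasDerivAt_pow 2 x2).const_mul z
    have ds2 := d2.sinh
    have dA2 : HasDerivAt (fun x : ℝ => Real.sinh (z * x ^ 2) / (z * x)) _ x2 :=
      ds2.div ((hasDerivAt_id x2).const_mul z) (mul_ne_zero hz hx2)
    have dB2 : HasDerivAt (fun x : ℝ => Real.exp (z * x ^ 2)) _ x2 := d2.exp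
    have dD2 : HasDerivAt (fun x : ℝ => Real.sinh (z * x ^ 2) / (z * x ^ 2)) _ x2 :=
      ds2.div d2 hz2
    have dE2 : HasDerivAt (fun x : ℝ => c * z / Real.sinh (z * x ^ 2)) _ x2 :=
      (hasDerivAt_const x2 (c * z)).div ds2 hsh2
    -- lifts to ℝ⁴
    have FA1 := dA1.comp_hasFDerivAt (x1,y1,x2,y2) P1
    have FC1 := dC1.comp_hasFDerivAt (x1,y1,x2,y2) P1
    have FD1 := dD1.comp_hasFDerivAt (x1,y1,x2,y2) P1
    have FE1 := dE1.comp_hasFDerivAt (x1,y1,x2,y2) P1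
    have FA2 := dA2.comp_hasFDerivAt (x1,y1,x2,y2) P3
    have FB2 := dB2.comp_hasFDerivAt (x1,y1,x2,y2) P3
    have FD2 := dD2.comp_hasFDerivAt (x1,y1,x2,y2) P3
    have FE2 := dE2.comp_hasFDerivAt (x1,y1,x2,y2) P3
    have Fy1 := (hasDerivAt_pow 2 y1).comp_hasFDerivAt (x1,y1,x2,y2) P2
    have Fy2 := (hasDerivAt_pow 2 y2).comp_hasFDerivAt (x1,y1,x2,y2) P4
    -- neighborhood facts
    have hev : ∀ᶠ q : ℝ×ℝ×ℝ×ℝ in nhds (x1,y1,x2,y2), q.1 ≠ 0 ∧ q.2.2.1 ≠ 0 :=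
      (continuous_fst.continuousAt.eventually_ne hx1).and
        ((continuous_fst.comp (continuous_snd.comp continuous_snd)).continuousAt.eventually_ne hx2)
    have hH2 : HasFDerivAt (𝕜 := ℝ) (H2 z) _ (x1,y1,x2,y2) :=
      ((((FA1.mul P2).mul FB2).add ((FC1.mul FA2).mul P4)).const_mul (-(1/2))).congr_of_eventuallyEq
        (hev.mono fun q hq => by
          obtain ⟨h1, h2⟩ := hq
          simp only [H2, sinhc, if_neg (mul_ne_zero hz (pow_ne_zero 2 h1)),
            if_neg (mul_ne_zero hz (pow_ne_zero 2 h2)), Pi.mul_apply, Pi.add_apply,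
            Function.comp_apply]
          field_simp)
    have hH3 : HasFDerivAt (𝕜 := ℝ) (H3 z c) _ (x1,y1,x2,y2) :=
      (((((FD1.mul Fy1).add FE1).const_mul (1/2)).mul FB2).add
        ((FC1.const_mul (1/2)).mul ((FD2.mul Fy2).add FE2))).congr_of_eventuallyEq
        (hev.mono fun q hq => by
          obtain ⟨h1, h2⟩ := hq
          have hs1 : Real.sinh (z * q.1 ^ 2) ≠ 0 :=
            Real.sinh_ne_zero.mpr (mul_ne_zero hz (pow_ne_zero 2 h1))
          have hs2 : Real.sinh (z * q.2.2.1 ^ 2) ≠ 0 :=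
            Real.sinh_ne_zero.mpr (mul_ne_zero hz (pow_ne_zero 2 h2))
          simp only [H3, sinhc, if_neg (mul_ne_zero hz (pow_ne_zero 2 h1)),
            if_neg (mul_ne_zero hz (pow_ne_zero 2 h2)), Pi.mul_apply, Pi.add_apply,
            Function.comp_apply]
          field_simp)
    -- nonzero facts for exponentials
    have hE1 : Real.exp (z * x1 ^ 2) ≠ 0 := Real.exp_ne_zero _
    have hE2 : Real.exp (z * x2 ^ 2) ≠ 0 := Real.exp_ne_zero _
    have hq1 : Real.exp (z * x1 ^ 2) ^ 2 - 1 ≠ 0 := by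
      have h : Real.exp (z * x1 ^ 2) ^ 2 = Real.exp (z * x1 ^ 2 + z * x1 ^ 2) := by
        rw [Real.exp_add]; ring
      rw [h, sub_ne_zero]
      intro hh
      have h0 : z * x1 ^ 2 + z * x1 ^ 2 = 0 := Real.exp_injective (by rw [hh, Real.exp_zero])
      exact hz1 (by linarith)
    have hq2 : Real.exp (z * x2 ^ 2) ^ 2 - 1 ≠ 0 := by
      have h : Real.exp (z * x2 ^ 2) ^ 2 = Real.exp (z * x2 ^ 2 + z * x2 ^ 2) := by
        rw [Real.exp_add]; ring
      rw [h, sub_ne_zero]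
      intro hh
      have h0 : z * x2 ^ 2 + z * x2 ^ 2 = 0 := Real.exp_injective (by rw [hh, Real.exp_zero])
      exact hz2 (by linarith)
    refine ⟨?_, ?_, ?_⟩
    · simp only [pb4]
      rw [hH1.fderiv, hH2.fderiv]
      simp [H1]
      have hsum : z * x1 ^ 2 + z * x2 ^ 2 ≠ 0 := by
        have h : z * x1 ^ 2 + z * x2 ^ 2 = z * (x1 ^ 2 + x2 ^ 2) := by ring
        rw [h]; exact mul_ne_zero hz (by positivity)
      rw [show (2:ℝ) * z * (2⁻¹ * (x1 ^ 2 + x2 ^ 2)) = z * x1 ^ 2 + z * x2 ^ 2 from by ring]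
      simp only [sinhc, if_neg hsum]
      rw [Real.sinh_add]
      field_simp
      simp only [Real.sinh_eq, Real.cosh_eq, Real.exp_neg]
      field_simp
      ring
    · simp only [pb4]
      rw [hH1.fderiv, hH3.fderiv]
      simp [H1, H2, sinhc, if_neg hz1, if_neg hz2]
      rw [if_neg (not_or.mpr ⟨hz, hx1⟩), if_neg (not_or.mpr ⟨hz, hx2⟩)]
      field_simp
    · simp only [pb4]
      rw [hH2.fderiv, hH3.fderiv]
      simp [H1, H3, sinhc, if_neg hz1, if_neg hz2]
      rw [if_neg (not_or.mpr ⟨hz, hx1⟩), if_neg (not_or.mpr ⟨hz, hx2⟩),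
        if_neg (not_or.mpr ⟨hz, hx1⟩), if_neg (not_or.mpr ⟨hz, hx2⟩)]
      rw [show (2:ℝ) * z * (2⁻¹ * (x1 ^ 2 + x2 ^ 2)) = z * x1 ^ 2 + z * x2 ^ 2 from by ring]
      rw [Real.cosh_add]
      have hd1 : Real.exp (z * x1 ^ 2) - (Real.exp (z * x1 ^ 2))⁻¹ ≠ 0 := by
        intro h
        apply hq1
        have := sub_eq_zero.mp h
        field_simp at this
        nlinarith [this]
      have hd2 : Real.exp (z * x2 ^ 2) - (Real.exp (z * x2 ^ 2))⁻¹ ≠ 0 := by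
        intro h
        apply hq2
        have := sub_eq_zero.mp h
        field_simp at this
        nlinarith [this]
      field_simp
      simp only [Real.sinh_eq, Real.cosh_eq, Real.exp_neg]
      field_simp
      ring
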